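/- arXiv:math/9912053 — 2 statements merged into one kernel-verified Lean document; each statement's English description precedes it below -/
import Mathlib

section
/- For m odd and a even, det_{0≤i,j≤a-1}(δ_{ij} + (-1)^j [m+i+j choose j]_{-1}) = det(I(a/2) + B(a/2, (m-1)/2)) · det(I(a/2) - B(a/2, (m+1)/2)), where B(N,μ) is the N×N matrix with entries binomial(μ+i+j, j) and [·]_{-1} is the q-binomial at q=-1. -/
/-!
At `q = -1` the Gaussian binomial `[n, k]` vanishes when `n` is even and `k` is odd, and is
`choose (n / 2) (k / 2)` otherwise. Listing the indices evens first, then odds, the matrix therefore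
becomes block lower triangular: for odd `m` an even row `i` and an odd column `j` give
`m + i + j` even. The even and odd diagonal blocks are `1 + B((m-1)/2)` and `1 - B((m+1)/2)`, the
sign coming from `(-1)^j` at odd `j`.
-/

/-- The Gaussian binomial coefficient as a polynomial in `q`, defined by the
`q`-Pascal recurrence `[n+1, k+1] = [n, k] + q^(k+1) [n, k+1]`. -/
noncomputable def qbinom : ℕ → ℕ → Polynomial ℤ
  | _, 0 => 1
  | 0, _ + 1 => 0
  | n + 1, k + 1 => qbinom n k + Polynomial.X ^ (k + 1) * qbinom n (k + 1)

theorem qbinom_eval_neg_one :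
    ∀ n k, (qbinom n k).eval (-1) = if Even n ∧ Odd k then 0 else ((n / 2).choose (k / 2) : ℤ)
  | _, 0 => by simp [qbinom]
  | 0, k + 1 => by
    rcases Nat.even_or_odd' k with ⟨t, rfl | rfl⟩ <;>
      simp [qbinom, parity_simps, show ∀ x, (2 * x + 1 + 1) / 2 = x + 1 by omega]
  | n + 1, k + 1 => by
    rw [qbinom, Polynomial.eval_add, Polynomial.eval_mul, Polynomial.eval_pow, Polynomial.eval_X,
      qbinom_eval_neg_one n k, qbinom_eval_neg_one n (k + 1)]
    rcases Nat.even_or_odd' n with ⟨s, rfl | rfl⟩ <;> rcases Nat.even_or_odd' k with ⟨t, rfl | rfl⟩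
    all_goals simp [parity_simps, pow_succ, Nat.choose_succ_succ',
      show ∀ x, (2 * x + 1) / 2 = x by omega, show ∀ x, (2 * x + 1 + 1) / 2 = x + 1 by omega]

theorem qbinom_eval_neg_one_two_mul (n t : ℕ) :
    (qbinom n (2 * t)).eval (-1) = ((n / 2).choose t : ℤ) := by
  simp [qbinom_eval_neg_one]

theorem qbinom_eval_neg_one_of_even_of_odd {n k : ℕ} (hn : Even n) (hk : Odd k) :
    (qbinom n k).eval (-1) = 0 := by
  simp [qbinom_eval_neg_one, hn, hk]

theorem qbinom_eval_neg_one_two_mul_add_one {n : ℕ} (hn : Odd n) (t : ℕ) :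
    (qbinom n (2 * t + 1)).eval (-1) = ((n / 2).choose t : ℤ) := by
  simp [qbinom_eval_neg_one, Nat.not_even_iff_odd.mpr hn, show (2 * t + 1) / 2 = t by omega]

def finEvenOddEquiv {a : ℕ} (ha : Even a) : Fin (a / 2) ⊕ Fin (a / 2) ≃ Fin a where
  toFun := Sum.elim (fun i => ⟨2 * i, by omega⟩) (fun i => ⟨2 * i + 1, by omega⟩)
  invFun i := if (i : ℕ) % 2 = 0 then .inl ⟨i / 2, by have := Nat.even_iff.mp ha; omega⟩
    else .inr ⟨i / 2, by have := Nat.even_iff.mp ha; omega⟩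
  left_inv := by rintro (i | i) <;> simp [Nat.add_mod, Nat.mul_add_div]
  right_inv i := by
    by_cases h : (i : ℕ) % 2 = 0 <;> simp [h, Fin.ext_iff] <;> omega

@[simp]
theorem finEvenOddEquiv_inl_val {a : ℕ} (ha : Even a) (i : Fin (a / 2)) :
    (finEvenOddEquiv ha (.inl i) : ℕ) = 2 * i := rfl

@[simp]
theorem finEvenOddEquiv_inr_val {a : ℕ} (ha : Even a) (i : Fin (a / 2)) :
    (finEvenOddEquiv ha (.inr i) : ℕ) = 2 * i + 1 := rfl

theorem Matrix.det_eq_det_even_mul_det_odd {R : Type*} [CommRing R] {a : ℕ} (ha : Even a)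
    (M : Matrix (Fin a) (Fin a) R) (h : ∀ i j : Fin a, Even (i : ℕ) → Odd (j : ℕ) → M i j = 0) :
    M.det = (M.submatrix (finEvenOddEquiv ha ∘ .inl) (finEvenOddEquiv ha ∘ .inl)).det *
      (M.submatrix (finEvenOddEquiv ha ∘ .inr) (finEvenOddEquiv ha ∘ .inr)).det := by
  set e := finEvenOddEquiv ha
  have h₁₂ : (M.submatrix e e).toBlocks₁₂ = 0 := by
    ext i j
    exact h _ _ (by simp [e]) (by simp [e])
  rw [← det_submatrix_equiv_self e, ← fromBlocks_toBlocks (M.submatrix e e), h₁₂,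
    det_fromBlocks_zero₁₂]
  rfl

theorem stmt10 (a m : ℕ) (ha : Even a) (hm : Odd m) :
    let B1 : Matrix (Fin (a / 2)) (Fin (a / 2)) ℚ :=
      Matrix.of fun i j => (Nat.choose ((m - 1) / 2 + i.val + j.val) j.val : ℚ)
    let B2 : Matrix (Fin (a / 2)) (Fin (a / 2)) ℚ :=
      Matrix.of fun i j => (Nat.choose ((m + 1) / 2 + i.val + j.val) j.val : ℚ)
    Matrix.det (Matrix.of fun i j : Fin a =>
        (if i = j then (1 : ℚ) else 0) +
          (-1 : ℚ) ^ j.val * (((qbinom (m + i.val + j.val) j.val).eval (-1) : ℤ) : ℚ)) =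
      Matrix.det (1 + B1) * Matrix.det (1 - B2) := by
  intro B1 B2
  have hm_mod : m % 2 = 1 := Nat.odd_iff.mp hm
  rw [Matrix.det_eq_det_even_mul_det_odd ha]
  · congr 2 <;> ext i j
    · simp [B1, Matrix.one_apply, qbinom_eval_neg_one_two_mul, pow_mul,
        show (m + 2 * i + 2 * j) / 2 = (m - 1) / 2 + i + j by omega]
    · have hodd : Odd (m + (2 * i + 1) + (2 * j + 1)) :=
        (hm.add_odd (odd_two_mul_add_one _)).add_odd (odd_two_mul_add_one _)
      simp [B2, Matrix.one_apply, qbinom_eval_neg_one_two_mul_add_one hodd, pow_succ, pow_mul,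
        show (m + (2 * i + 1) + (2 * j + 1)) / 2 = (m + 1) / 2 + i + j by omega, sub_eq_add_neg]
  · intro i j hi hj
    have hij : i ≠ j := fun h => Nat.not_even_iff_odd.mpr hj (h ▸ hi)
    simp [hij, qbinom_eval_neg_one_of_even_of_odd ((hm.add_even hi).add_odd hj) hj]
end

section
/- Let a, m be even nonnegative integers, m/2 < e ≤ m, 1 ≤ s ≤ a+m-e, and c an indeterminate. For each 1 ≤ i ≤ a: ∑_{j=s}^{s+e} C(e, j-s) · (c+m+i-j+1)_{j-1} · (-c-2e-i+j+1)_{a+m-j} = 0, where (α)_k is the rising factorial and the identity holds in ℚ(c) (equivalently as polynomial identity in c). -/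
/-!
Writing `j = s + k`, the `j`-th term splits as a factor independent of `k` times
`C(e, k) · x^(k) · y^(e-k)` in falling factorials, where `x = c + m + i - s` and
`y = s - c - e - i`. By Chu–Vandermonde the sum collapses to that factor times
`(x + y)^(e) = (m - e)^(e)`, which vanishes because `m - e < e`.
-/

/-- The rising factorial (Pochhammer symbol) `(x)_k = x (x+1) ⋯ (x+k-1)`. -/
def asc (x : ℚ) (k : ℕ) : ℚ := ∏ i ∈ Finset.range k, (x + i)

open Polynomial Finset

theorem descPochhammer_smeval_eq_eval {R : Type*} [CommRing R] (r : R) (n : ℕ) :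
    (descPochhammer ℤ n).smeval r = (descPochhammer R n).eval r := by
  rw [← descPochhammer_map (Int.castRingHom R), eval_map, ← eval₂_smulOneHom_eq_smeval]
  congr
  exact Subsingleton.elim _ _

theorem descPochhammer_eval_add {R : Type*} [CommRing R] (r s : R) (n : ℕ) :
    (descPochhammer R n).eval (r + s) = ∑ k ∈ range (n + 1),
      n.choose k * ((descPochhammer R k).eval r * (descPochhammer R (n - k)).eval s) := by
  simp only [← descPochhammer_smeval_eq_eval]
  rw [Ring.descPochhammer_smeval_add n (Commute.all r s),
    Nat.sum_antidiagonal_eq_sum_range_succ fun i j =>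
      (n.choose i : R) * ((descPochhammer ℤ i).smeval r * (descPochhammer ℤ j).smeval s)]

theorem asc_eq_eval_ascPochhammer (x : ℚ) (n : ℕ) : asc x n = (ascPochhammer ℚ n).eval x := by
  induction n with
  | zero => simp [asc]
  | succ n ih => rw [asc, prod_range_succ, ← asc, ih, ascPochhammer_succ_eval]

theorem asc_add (x : ℚ) (n k : ℕ) : asc x (n + k) = asc x n * asc (x + n) k := by
  simp only [asc, prod_range_add, Nat.cast_add, add_assoc]

theorem asc_sub_add_one_add (x : ℚ) (k n : ℕ) :
    asc (x - k + 1) (k + n) = (descPochhammer ℚ k).eval x * asc (x + 1) n := by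
  rw [asc_add, asc_eq_eval_ascPochhammer (x - k + 1), ← descPochhammer_eval_eq_ascPochhammer]
  ring_nf

theorem stmt12_general (a m e s i : ℕ)
    (he1 : m < 2 * e) (he2 : e ≤ m) (hs1 : 1 ≤ s) (hs2 : s ≤ a + m - e)
    (c : ℚ) :
    ∑ j ∈ Finset.Icc s (s + e),
        (Nat.choose e (j - s) : ℚ) *
          asc (c + m + i - j + 1) (j - 1) *
          asc (-c - 2 * e - i + j + 1) (a + m - j) = 0 := by
  set x : ℚ := c + m + i - s
  set y : ℚ := -c - e - i + s
  have hterm : ∀ k ∈ range (e + 1),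
      (e.choose (s + k - s) : ℚ) * asc (c + m + i - ↑(s + k) + 1) (s + k - 1) *
          asc (-c - 2 * e - i + ↑(s + k) + 1) (a + m - (s + k))
        = asc (x + 1) (s - 1) * asc (y + 1) (a + m - s - e) *
          (e.choose k * ((descPochhammer ℚ k).eval x * (descPochhammer ℚ (e - k)).eval y)) := by
    intro k hk
    have hke : k ≤ e := Nat.lt_succ_iff.mp (mem_range.mp hk)
    rw [Nat.add_sub_cancel_left, show s + k - 1 = k + (s - 1) by omega,
      show a + m - (s + k) = (e - k) + (a + m - s - e) by omega,
      show c + m + i - ↑(s + k) + 1 = x - k + 1 by push_cast; ring,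
      show -c - 2 * e - i + ↑(s + k) + 1 = y - ↑(e - k) + 1 by push_cast [Nat.cast_sub hke]; ring,
      asc_sub_add_one_add, asc_sub_add_one_add]
    ring
  have hxy : x + y = ↑(m - e) := by push_cast [Nat.cast_sub he2]; ring
  rw [← Ico_add_one_right_eq_Icc, sum_Ico_eq_sum_range, show s + e + 1 - s = e + 1 by omega,
    sum_congr rfl hterm, ← mul_sum, ← descPochhammer_eval_add, hxy,
    descPochhammer_eval_coe_nat_of_lt (by omega), mul_zero]

theorem stmt12 (a m e s i : ℕ) (ha : Even a) (hm : Even m)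
    (he1 : m < 2 * e) (he2 : e ≤ m) (hs1 : 1 ≤ s) (hs2 : s ≤ a + m - e)
    (hi1 : 1 ≤ i) (hia : i ≤ a) (c : ℚ) :
    ∑ j ∈ Finset.Icc s (s + e),
        (Nat.choose e (j - s) : ℚ) *
          asc (c + m + i - j + 1) (j - 1) *
          asc (-c - 2 * e - i + j + 1) (a + m - j) = 0 :=
  stmt12_general a m e s i he1 he2 hs1 hs2 c
end
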